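/- arXiv:2003.05584 — 12 statements merged into one kernel-verified Lean document; each statement's English description precedes it below -/
import Mathlib

section
/- Let K be a field of characteristic ≠ 2 and A ∈ K[t] nonzero. Suppose (x,y,z) ∈ K[t]³ satisfies x² + y² + z² = Axyz with x, y, z all nonzero and deg x ≤ deg y < deg z. Then deg z = deg A + deg x + deg y, and the leading coefficient of z equals the product of the leading coefficients of A, x, and y. -/
open Polynomial

/-- If (x,y,z) is a solution of the Markoff equation with x,y,z nonzero
and deg x ≤ deg y < deg z, then deg z = deg A + deg x + deg y and the leading
coefficient of z is the product of the leading coefficients of A, x and y. -/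
theorem markoff_degree_and_leadingCoeff
    {K : Type*} [Field K] (h2 : (2 : K) ≠ 0)
    (A : Polynomial K) (hA : A ≠ 0)
    (x y z : Polynomial K) (hx : x ≠ 0) (hy : y ≠ 0) (hz : z ≠ 0)
    (heq : x ^ 2 + y ^ 2 + z ^ 2 = A * x * y * z)
    (hxy : x.natDegree ≤ y.natDegree) (hyz : y.natDegree < z.natDegree) :
    z.natDegree = A.natDegree + x.natDegree + y.natDegree ∧
    z.leadingCoeff = A.leadingCoeff * x.leadingCoeff * y.leadingCoeff := by
  have hlt : (x ^ 2 + y ^ 2).natDegree < (z ^ 2).natDegree := by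
    have h1 : (x ^ 2 + y ^ 2).natDegree ≤ 2 * y.natDegree := by
      refine le_trans (natDegree_add_le _ _) ?_
      simp only [natDegree_pow]
      omega
    have h2' : (z ^ 2).natDegree = 2 * z.natDegree := by simp [natDegree_pow]
    omega
  have hdlt : (x ^ 2 + y ^ 2).degree < (z ^ 2).degree := degree_lt_degree hlt
  have hnd : (x ^ 2 + y ^ 2 + z ^ 2).natDegree = 2 * z.natDegree := by
    rw [natDegree_add_eq_right_of_natDegree_lt hlt, natDegree_pow]
  have hlc : (x ^ 2 + y ^ 2 + z ^ 2).leadingCoeff = z.leadingCoeff ^ 2 := by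
    rw [leadingCoeff_add_of_degree_lt hdlt, leadingCoeff_pow]
  have hrd : (A * x * y * z).natDegree =
      A.natDegree + x.natDegree + y.natDegree + z.natDegree := by
    rw [natDegree_mul (by exact mul_ne_zero (mul_ne_zero hA hx) hy) hz,
      natDegree_mul (mul_ne_zero hA hx) hy, natDegree_mul hA hx]
  have hrl : (A * x * y * z).leadingCoeff =
      A.leadingCoeff * x.leadingCoeff * y.leadingCoeff * z.leadingCoeff := by
    simp [leadingCoeff_mul]
  have hd : 2 * z.natDegree = A.natDegree + x.natDegree + y.natDegree + z.natDegree := by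
    rw [← hnd, ← hrd, heq]
  have hl : z.leadingCoeff ^ 2 =
      A.leadingCoeff * x.leadingCoeff * y.leadingCoeff * z.leadingCoeff := by
    rw [← hlc, ← hrl, heq]
  have hzlc : z.leadingCoeff ≠ 0 := leadingCoeff_ne_zero.mpr hz
  constructor
  · omega
  · rw [sq] at hl
    exact mul_right_cancel₀ hzlc hl
end

section
/- Let K be a field of characteristic ≠ 2 and A ∈ K[t] nonzero. If (x,y,z) ∈ K[t]³ satisfies x² + y² + z² = Axyz with x ≠ 0, deg x ≤ deg y = deg z, and max(deg x, deg y, deg z) > 0, then A and x are constant polynomials. -/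
open Polynomial

/-- If (x,y,z) is a fundamental Markoff triple (deg x ≤ deg y = deg z,
positive max degree) with x ≠ 0, then A and x are constants. -/
theorem markoff_fundamental_x_ne_zero_implies_A_x_constant
    {K : Type*} [Field K] (h2 : (2 : K) ≠ 0)
    (A : Polynomial K) (hA : A ≠ 0)
    (x y z : Polynomial K)
    (heq : x ^ 2 + y ^ 2 + z ^ 2 = A * x * y * z)
    (hx : x ≠ 0)
    (hxy : x.degree ≤ y.degree) (hyz : y.degree = z.degree)
    (hmax : 0 < max x.degree (max y.degree z.degree)) :
    A.natDegree = 0 ∧ x.natDegree = 0 := by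
  have hy : y ≠ 0 := by
    rintro rfl
    simp only [degree_zero, le_bot_iff, degree_eq_bot] at hxy
    exact hx hxy
  have hz : z ≠ 0 := by
    rintro rfl
    rw [degree_zero, degree_eq_bot] at hyz
    exact hy hyz
  have hdeg : (x ^ 2 + y ^ 2 + z ^ 2).degree ≤ y.degree + z.degree := by
    refine (degree_add_le _ _).trans (max_le ((degree_add_le _ _).trans (max_le ?_ ?_)) ?_)
    · rw [degree_pow, two_smul]
      exact add_le_add hxy (hxy.trans hyz.le)
    · rw [degree_pow, two_smul]
      exact add_le_add le_rfl hyz.le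
    · rw [degree_pow, two_smul]
      exact add_le_add hyz.ge le_rfl
  rw [heq, degree_mul, degree_mul, degree_mul, degree_eq_natDegree hA,
    degree_eq_natDegree hx, degree_eq_natDegree hy, degree_eq_natDegree hz,
    ← Nat.cast_add, ← Nat.cast_add, ← Nat.cast_add, ← Nat.cast_add, Nat.cast_le] at hdeg
  omega
end

section
/- Let K be a field of characteristic ≠ 2 and A ∈ K[t] with deg A ≥ 1. Then every fundamental Markoff triple for A is of the form (0, ε·i·f, f) for some non-constant f ∈ K[t] and ε ∈ {1, −1}, where i² = −1 in K. In particular, the first coordinate of any fundamental triple is zero. -/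
open Polynomial

/-- If A is non-constant, every fundamental Markoff triple is of the form
(0, ε·i·f, f) with f non-constant, ε ∈ {1,−1} and i² = −1 in K. -/
theorem markoff_fundamental_triple_A_nonconstant
    {K : Type*} [Field K] (h2 : (2 : K) ≠ 0)
    (A : Polynomial K) (hA : 0 < A.natDegree)
    (x y z : Polynomial K)
    (heq : x ^ 2 + y ^ 2 + z ^ 2 = A * x * y * z)
    (hxy : x.degree ≤ y.degree) (hyz : y.degree = z.degree)
    (hmax : 0 < max x.degree (max y.degree z.degree)) :
    ∃ i : K, i ^ 2 = -1 ∧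
      ∃ ε : K, (ε = 1 ∨ ε = -1) ∧
        ∃ f : Polynomial K, 0 < f.natDegree ∧
          x = 0 ∧ y = C (ε * i) * f ∧ z = f := by
  have hdz : 0 < z.degree := by
    have h1 : x.degree ≤ z.degree := hxy.trans hyz.le
    have : max x.degree (max y.degree z.degree) = z.degree := by
      rw [hyz]; simp [max_eq_right h1]
    rwa [this] at hmax
  have hz0 : z ≠ 0 := fun h => by simp [h] at hdz
  have hnz : 0 < z.natDegree := natDegree_pos_iff_degree_pos.mpr hdz
  have hy0 : y ≠ 0 := fun h => by
    rw [h] at hyz; simp [← hyz] at hdz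
  have hny : y.natDegree = z.natDegree := natDegree_eq_of_degree_eq hyz
  have hx : x = 0 := by
    by_contra hx0
    have hA0 : A ≠ 0 := fun h => by simp [h] at hA
    have hnx : x.natDegree ≤ z.natDegree :=
      natDegree_le_natDegree (hxy.trans hyz.le)
    have hR : (A * x * y * z).natDegree
        = A.natDegree + x.natDegree + y.natDegree + z.natDegree := by
      rw [natDegree_mul (mul_ne_zero (mul_ne_zero hA0 hx0) hy0) hz0,
        natDegree_mul (mul_ne_zero hA0 hx0) hy0, natDegree_mul hA0 hx0]
    have hL : (x ^ 2 + y ^ 2 + z ^ 2).natDegree ≤ 2 * z.natDegree := by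
      refine le_trans (natDegree_add_le _ _) ?_
      have := natDegree_add_le (x ^ 2) (y ^ 2)
      simp only [natDegree_pow] at *
      omega
    rw [heq, hR] at hL
    omega
  subst hx
  have hsq : y ^ 2 = -(z ^ 2) := by
    have := heq
    simp only [zero_pow, ne_eq, OfNat.ofNat_ne_zero, not_false_eq_true, zero_add,
      mul_zero, zero_mul] at this
    linear_combination this
  set i : K := y.leadingCoeff / z.leadingCoeff with hi
  have hlz : z.leadingCoeff ≠ 0 := leadingCoeff_ne_zero.mpr hz0
  have hlc : y.leadingCoeff ^ 2 = -(z.leadingCoeff ^ 2) := by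
    have := congrArg leadingCoeff hsq
    simpa [leadingCoeff_pow] using this
  have hi2 : i ^ 2 = -1 := by
    rw [hi, div_pow, hlc, neg_div, div_self (pow_ne_zero _ hlz)]
  have hfac : (y - C i * z) * (y + C i * z) = 0 := by
    have h1 : (C i : Polynomial K) ^ 2 = -1 := by rw [← C_pow, hi2]; simp
    have h3 : (y - C i * z) * (y + C i * z) = y ^ 2 - (C i) ^ 2 * z ^ 2 := by ring
    rw [h3, h1, hsq]; ring
  refine ⟨i, hi2, ?_⟩
  rcases mul_eq_zero.mp hfac with h | h
  · exact ⟨1, Or.inl rfl, z, hnz, rfl, by rw [one_mul]; linear_combination h, rfl⟩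
  · exact ⟨-1, Or.inr rfl, z, hnz, rfl, by
      rw [map_mul]; simp; linear_combination h, rfl⟩
end

section
/- Let K be a field of characteristic ≠ 2 containing i with i² = −1, and let A ∈ K* be a nonzero constant. Then for every non-constant f ∈ K[t] and every a ∈ {1, −1} and sign ε ∈ {1, −1}, the triple (2a/A, a·f + ε·2ai/A, f) satisfies x² + y² + z² = Axyz. -/
open Polynomial

/-- If i² = −1 in K and A ∈ K* is a nonzero constant, then for every
non-constant f and signs a, ε ∈ {1,−1}, the triple (2a/A, a·f + ε·2ai/A, f)
satisfies the Markoff equation. -/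
theorem markoff_fundamental_triple_formula_satisfies_equation
    {K : Type*} [Field K] (h2 : (2 : K) ≠ 0)
    (i : K) (hi : i ^ 2 = -1)
    (A : K) (hA : A ≠ 0)
    (f : Polynomial K) (hf : 0 < f.natDegree)
    (a ε : K) (ha : a = 1 ∨ a = -1) (hε : ε = 1 ∨ ε = -1) :
    (C (2 * a / A)) ^ 2 + (C a * f + C (ε * (2 * a * i / A))) ^ 2 + f ^ 2 =
      C A * C (2 * a / A) * (C a * f + C (ε * (2 * a * i / A))) * f := by
  set b : K := A⁻¹ with hb
  have e1 : 2 * a / A = 2 * a * b := by rw [div_eq_mul_inv]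
  have e2 : ε * (2 * a * i / A) = ε * (2 * a * i * b) := by rw [div_eq_mul_inv]
  rw [e1, e2]
  have hI : (C i : Polynomial K) ^ 2 = -1 := by
    rw [← C_pow, hi]; simp
  have hd : (C a : Polynomial K) ^ 2 = 1 := by
    rcases ha with rfl | rfl <;> norm_num [← C_pow]
  have he : (C ε : Polynomial K) ^ 2 = 1 := by
    rcases hε with rfl | rfl <;> norm_num [← C_pow]
  have hAB : (C A : Polynomial K) * C b = 1 := by
    rw [← C_mul, hb, mul_inv_cancel₀ hA]; simp
  have h2' : (C (2 : K) : Polynomial K) = 2 := map_ofNat C 2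
  simp only [C_mul, h2']
  linear_combination (4 * (C a)^2 * (C b)^2 * (C ε)^2) * hI
    - (4 * (C a)^2 * (C b)^2) * he - f^2 * hd
    - (2 * (C a)^2 * f^2 + 4 * (C a) * (C ε) * ((C a) * (C i)) * (C b) * f) * hAB
end

section
/- Let K be a field of characteristic ≠ 2 and A ∈ K* a nonzero constant. Suppose (x,y,z) ∈ K[t]³ is a fundamental Markoff triple for A with x ≠ 0. Then K contains i with i² = −1, and there exist a ∈ {1, −1}, a sign ε ∈ {1, −1}, and a non-constant f ∈ K[t] such that x = 2a/A, y = a·f + ε·2ai/A, and z = f. -/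
/-!
Comparing degrees in `x² + y² + z² = A x y z` forces `x` to be a nonzero constant `c`. Completing
the square in `y`, with `a = A c / 2`, gives the Pell-type equation
`(y - a z)² - (a² - 1) z² = -c²`. Over `K[t]` such an equation with `a² ≠ 1` has only constant
solutions `z`: comparing leading coefficients shows that `a² - 1 = l²` is a square, and then
`(y - a z - l z)(y - a z + l z) = -c²` makes both factors, hence `2 l z`, constant. So `a² = 1`,
`(y - a z)² = -c²` is a constant `e² = -c²`, and `i = e / c` is a square root of `-1`.
-/

open Polynomial

namespace Polynomial

theorem natDegree_eq_zero_of_markoff {R : Type*} [CommRing R] [IsDomain R] {A : R} (hA : A ≠ 0)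
    {x y z : R[X]} (hx : x ≠ 0) (hy : y ≠ 0) (hz : z ≠ 0)
    (hxy : x.natDegree ≤ y.natDegree) (hyz : y.natDegree = z.natDegree)
    (h : x ^ 2 + y ^ 2 + z ^ 2 = C A * x * y * z) : x.natDegree = 0 := by
  have hrhs : (C A * x * y * z).natDegree = x.natDegree + y.natDegree + z.natDegree := by
    have hAx : C A * x ≠ 0 := mul_ne_zero (C_ne_zero.2 hA) hx
    rw [natDegree_mul (mul_ne_zero hAx hy) hz, natDegree_mul hAx hy, natDegree_C_mul hA]
  have hsq {p : R[X]} (hp : p.natDegree ≤ z.natDegree) : (p ^ 2).natDegree ≤ 2 * z.natDegree :=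
    natDegree_pow_le.trans (by omega)
  have hlhs : (x ^ 2 + y ^ 2 + z ^ 2).natDegree ≤ 2 * z.natDegree :=
    natDegree_add_le_of_degree_le
      (natDegree_add_le_of_degree_le (hsq (by omega)) (hsq hyz.le)) (hsq le_rfl)
  rw [h, hrhs] at hlhs
  omega

theorem leadingCoeff_sq_eq_of_sq_sub_C_mul_sq_eq_C {R : Type*} [CommRing R] [IsDomain R]
    {g d : R} {w z : R[X]} (hg : g ≠ 0) (hz : 0 < z.natDegree)
    (h : w ^ 2 - C g * z ^ 2 = C d) : w.leadingCoeff ^ 2 = g * z.leadingCoeff ^ 2 := by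
  have hw : w ^ 2 = C g * z ^ 2 + C d := by rw [← h]; ring
  have hlt : (C d).degree < (C g * z ^ 2).degree := by
    refine degree_C_le.trans_lt (natDegree_pos_iff_degree_pos.1 ?_)
    rw [natDegree_C_mul hg, natDegree_pow]
    omega
  rw [← leadingCoeff_pow, hw, leadingCoeff_add_of_degree_lt' hlt, leadingCoeff_mul,
    leadingCoeff_C, leadingCoeff_pow]

theorem natDegree_eq_zero_of_sq_sub_C_mul_sq_eq_C {K : Type*} [Field K] (h2 : (2 : K) ≠ 0)
    {g d : K} {w z : K[X]} (hg : g ≠ 0) (hd : d ≠ 0) (h : w ^ 2 - C g * z ^ 2 = C d) :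
    z.natDegree = 0 := by
  by_contra hz
  have hz_pos : 0 < z.natDegree := Nat.pos_of_ne_zero hz
  have hzl : z.leadingCoeff ≠ 0 := leadingCoeff_ne_zero.2 (ne_zero_of_natDegree_gt hz_pos)
  set l := w.leadingCoeff / z.leadingCoeff
  have hl : l ^ 2 = g := by
    rw [div_pow, leadingCoeff_sq_eq_of_sq_sub_C_mul_sq_eq_C hg hz_pos h]
    field_simp
  have hl0 : l ≠ 0 := by
    rintro hl0
    rw [hl0, zero_pow two_ne_zero] at hl
    exact hg hl.symm
  have hunit : IsUnit ((w - C l * z) * (w + C l * z)) := by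
    have hprod : (w - C l * z) * (w + C l * z) = C d := by rw [← h, ← hl, C_pow]; ring
    rw [hprod]
    exact isUnit_C.2 hd.isUnit
  have hdiff : (w + C l * z) - (w - C l * z) = C (2 * l) * z := by
    rw [C_mul, C_ofNat]; ring
  have hconst : (C (2 * l) * z).natDegree ≤ 0 := by
    rw [← hdiff]
    refine (natDegree_sub_le _ _).trans (max_le ?_ ?_) <;> apply le_of_eq
    · exact natDegree_eq_zero_of_isUnit (isUnit_of_mul_isUnit_right hunit)
    · exact natDegree_eq_zero_of_isUnit (isUnit_of_mul_isUnit_left hunit)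
  rw [natDegree_C_mul (mul_ne_zero h2 hl0)] at hconst
  omega

theorem exists_eq_C_of_sq_eq_C {R : Type*} [CommRing R] [IsDomain R] {p : R[X]} {d : R}
    (h : p ^ 2 = C d) : ∃ e : R, p = C e ∧ e ^ 2 = d := by
  have hp : p.natDegree = 0 := by
    have := congrArg natDegree h
    rw [natDegree_pow, natDegree_C] at this
    omega
  refine ⟨p.coeff 0, eq_C_of_natDegree_eq_zero hp, C_injective ?_⟩
  rw [C_pow, ← eq_C_of_natDegree_eq_zero hp, h]

end Polynomial

/-- If A ∈ K* is a nonzero constant and (x,y,z) is a fundamental Markoff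
triple with x ≠ 0, then K contains i with i² = −1 and the triple is of the form
(2a/A, a·f + ε·2ai/A, f) with a, ε ∈ {1,−1} and f non-constant. -/
theorem markoff_fundamental_triple_A_constant
    {K : Type*} [Field K] (h2 : (2 : K) ≠ 0)
    (A : K) (hA : A ≠ 0)
    (x y z : Polynomial K)
    (heq : x ^ 2 + y ^ 2 + z ^ 2 = C A * x * y * z)
    (hx : x ≠ 0)
    (hxy : x.degree ≤ y.degree) (hyz : y.degree = z.degree)
    (hmax : 0 < max x.degree (max y.degree z.degree)) :
    ∃ i : K, i ^ 2 = -1 ∧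
      ∃ a ε : K, (a = 1 ∨ a = -1) ∧ (ε = 1 ∨ ε = -1) ∧
        ∃ f : Polynomial K, 0 < f.natDegree ∧
          x = C (2 * a / A) ∧ y = C a * f + C (ε * (2 * a * i / A)) ∧ z = f := by
  rw [hyz, max_self, max_eq_right (hxy.trans hyz.le)] at hmax
  have hz_pos : 0 < z.natDegree := natDegree_pos_iff_degree_pos.2 hmax
  have hz : z ≠ 0 := ne_zero_of_natDegree_gt hz_pos
  have hy : y ≠ 0 := fun hy ↦ hz (degree_eq_bot.1 (by rw [← hyz, hy, degree_zero]))
  have hx_const := natDegree_eq_zero_of_markoff hA hx hy hz (natDegree_le_natDegree hxy)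
    (natDegree_eq_of_degree_eq hyz) heq
  obtain ⟨c, rfl⟩ : ∃ c, x = C c := ⟨_, eq_C_of_natDegree_eq_zero hx_const⟩
  have hc : c ≠ 0 := by rintro rfl; exact hx C_0
  set a := A * c / 2 with ha_def
  have hAc : C A * C c = 2 * C a := by rw [← C_mul, ← C_ofNat, ← C_mul, ha_def]; field_simp
  have hpell : (y - C a * z) ^ 2 - C (a ^ 2 - 1) * z ^ 2 = C (-c ^ 2) := by
    simp only [map_sub, map_pow, map_neg, map_one]
    linear_combination heq + y * z * hAc
  have ha : a ^ 2 = 1 := by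
    by_contra ha
    exact hz_pos.ne' (natDegree_eq_zero_of_sq_sub_C_mul_sq_eq_C h2 (sub_ne_zero.2 ha)
      (neg_ne_zero.2 (pow_ne_zero 2 hc)) hpell)
  rw [ha, sub_self, C_0, zero_mul, sub_zero] at hpell
  obtain ⟨e, he, he2⟩ := exists_eq_C_of_sq_eq_C hpell
  refine ⟨e / c, by field_simp; linear_combination he2, a, 1, sq_eq_one_iff.1 ha, Or.inl rfl,
    z, hz_pos, ?_, ?_, rfl⟩
  · rw [ha_def]; field_simp
  · rw [← sub_eq_iff_eq_add', he, ha_def]; field_simp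
end

section
/- Let K be a field of characteristic ≠ 2 and A ∈ K[t] nonzero. If (x,y,z) ∈ K[t]³ satisfies x² + y² + z² = Axyz, then (x, y, Axy − z) also satisfies the same equation; moreover if x,y,z are all nonzero with deg x ≤ deg y < deg z, then deg(Axy − z) < deg z. -/
open Polynomial

/-- The branching map ρ(x,y,z) = (x, y, Axy − z) preserves the Markoff
equation; moreover if x,y,z are all nonzero with deg x ≤ deg y < deg z, then
deg(Axy − z) < deg z. -/
theorem markoff_branching_automorphism
    {K : Type*} [Field K] (h2 : (2 : K) ≠ 0)
    (A : Polynomial K) (hA : A ≠ 0)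
    (x y z : Polynomial K)
    (heq : x ^ 2 + y ^ 2 + z ^ 2 = A * x * y * z) :
    (x ^ 2 + y ^ 2 + (A * x * y - z) ^ 2 = A * x * y * (A * x * y - z)) ∧
    (x ≠ 0 → y ≠ 0 → z ≠ 0 → x.natDegree ≤ y.natDegree → y.natDegree < z.natDegree →
      (A * x * y - z).degree < z.degree) := by
  constructor
  · linear_combination heq
  · intro hx hy hz hxy hyz
    set w := A * x * y - z with hw
    have key : z * w = x ^ 2 + y ^ 2 := by
      rw [hw]; linear_combination -heq
    by_cases hw0 : w = 0
    · rw [hw0, degree_zero, degree_eq_natDegree hz]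
      exact WithBot.bot_lt_coe _
    · have hsum : x ^ 2 + y ^ 2 ≠ 0 := by
        rw [← key]; exact mul_ne_zero hz hw0
      have h1 : z.natDegree + w.natDegree = (x ^ 2 + y ^ 2).natDegree := by
        rw [← key, natDegree_mul hz hw0]
      have h2' : (x ^ 2 + y ^ 2).natDegree ≤ 2 * y.natDegree := by
        refine (natDegree_add_le _ _).trans ?_
        simp only [natDegree_pow]
        omega
      have hlt : w.natDegree < z.natDegree := by omega
      exact degree_lt_degree hlt
end

section
/- Fix integers α ≥ 1 and β ≥ 0. Define the (α,β)-Euclid tree as the set of integer triples generated from the root (α, α, 2α+β) by the two operations (a,b,c) ↦ (b, c, b+c+β) and (a,b,c) ↦ (a, c, a+c+β); let L_j denote the set of triples obtained after exactly j applications of these operations. Then a triple T lies in the j-th layer of the (α,β)-Euclid tree if and only if T = (bα + (b−1)β, cα + (c−1)β, dα + (d−1)β) for some triple (b,c,d) in the j-th layer of the (1,0)-Euclid tree. -/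
/-- The maximum coordinate of a triple. -/
def tmax (T : ℕ × ℕ × ℕ) : ℕ := max T.1 (max T.2.1 T.2.2)

/-- First branching operation Γ_{β,1}(τ₁,τ₂,τ₃) = (τ₂, τ₃, τ₂+τ₃+β). -/
def Gamma1 (β : ℕ) (T : ℕ × ℕ × ℕ) : ℕ × ℕ × ℕ := (T.2.1, T.2.2, T.2.1 + T.2.2 + β)

/-- Second branching operation Γ_{β,2}(τ₁,τ₂,τ₃) = (τ₁, τ₃, τ₁+τ₃+β). -/
def Gamma2 (β : ℕ) (T : ℕ × ℕ × ℕ) : ℕ × ℕ × ℕ := (T.1, T.2.2, T.1 + T.2.2 + β)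

/-- The j-th layer of the (α,β)-Euclid tree. -/
def layer (α β : ℕ) : ℕ → Set (ℕ × ℕ × ℕ)
  | 0 => {(α, α, 2 * α + β)}
  | j + 1 => {T | ∃ P ∈ layer α β j, T = Gamma1 β P ∨ T = Gamma2 β P}

/-- The (α,β)-Euclid tree: all triples on some layer. -/
def EuclidTree (α β : ℕ) : Set (ℕ × ℕ × ℕ) := ⋃ j, layer α β j


/-- T lies on the j-th layer of the (α,β)-Euclid tree iff
T = (bα+(b−1)β, cα+(c−1)β, dα+(d−1)β) for some (b,c,d) on the j-th layer of the
(1,0)-Euclid tree. -/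
theorem layer_iff_scaled_layer (α β : ℕ) (hα : 1 ≤ α) (j : ℕ) (T : ℕ × ℕ × ℕ) :
    T ∈ layer α β j ↔ ∃ b c d : ℕ, (b, c, d) ∈ layer 1 0 j ∧
      T = (b * α + (b - 1) * β, c * α + (c - 1) * β, d * α + (d - 1) * β) := by
  have pos : ∀ j (T : ℕ × ℕ × ℕ), T ∈ layer 1 0 j →
      1 ≤ T.1 ∧ 1 ≤ T.2.1 ∧ 1 ≤ T.2.2 := by
    intro j
    induction j with
    | zero =>
      intro T hT
      simp only [layer, Set.mem_singleton_iff] at hT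
      subst hT; simp
    | succ j ih =>
      rintro T ⟨P, hP, h | h⟩ <;> subst h <;>
        rcases ih P hP with ⟨h1, h2, h3⟩ <;> simp [Gamma1, Gamma2] <;> omega
  have key : ∀ c d : ℕ, 1 ≤ c → 1 ≤ d →
      (c + d) * α + (c + d - 1) * β =
        (c * α + (c - 1) * β) + (d * α + (d - 1) * β) + β := by
    intro c d hc hd
    obtain ⟨c', rfl⟩ := Nat.exists_eq_add_of_le hc
    obtain ⟨d', rfl⟩ := Nat.exists_eq_add_of_le hd
    simp only [Nat.add_sub_cancel_left]
    have h1 : 1 + c' + (1 + d') - 1 = c' + (1 + d') := by omega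
    rw [h1]; ring
  induction j generalizing T with
  | zero =>
    simp only [layer, Set.mem_singleton_iff]
    constructor
    · rintro rfl
      exact ⟨1, 1, 2, rfl, by norm_num⟩
    · rintro ⟨b, c, d, hbcd, rfl⟩
      simp only [layer, Set.mem_singleton_iff, Prod.mk.injEq] at hbcd
      obtain ⟨rfl, rfl, rfl⟩ := hbcd
      norm_num
  | succ j ih =>
    constructor
    · rintro ⟨P, hP, h | h⟩ <;> subst h <;>
        obtain ⟨b, c, d, hbcd, rfl⟩ := (ih P).1 hP <;>
        obtain ⟨hb, hc, hd⟩ := pos j _ hbcd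
      · refine ⟨c, d, c + d, ⟨(b, c, d), hbcd, Or.inl (by simp [Gamma1])⟩, ?_⟩
        simp [Gamma1, key c d hc hd]
      · refine ⟨b, d, b + d, ⟨(b, c, d), hbcd, Or.inr (by simp [Gamma2])⟩, ?_⟩
        simp [Gamma2, key b d hb hd]
    · rintro ⟨b', c', d', ⟨⟨b, c, d⟩, hQ, h | h⟩, rfl⟩ <;>
        [(simp only [Gamma1, Prod.mk.injEq] at h);
         (simp only [Gamma2, Prod.mk.injEq] at h)] <;>
        obtain ⟨rfl, rfl, rfl⟩ := h <;>
        obtain ⟨hb, hc, hd⟩ := pos j _ hQ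
      · refine ⟨(b * α + (b - 1) * β, b' * α + (b' - 1) * β, c' * α + (c' - 1) * β),
          (ih _).2 ⟨b, b', c', hQ, rfl⟩, Or.inl ?_⟩
        simp at hc hd
        simp [Gamma1, key b' c' hc hd]
      · refine ⟨(b' * α + (b' - 1) * β, c * α + (c - 1) * β, c' * α + (c' - 1) * β),
          (ih _).2 ⟨b', c, c', hQ, rfl⟩, Or.inr ?_⟩
        simp at hb hd
        simp [Gamma2, key b' c' hb hd]
end

section
/- For every integer n ≥ 3, the number of integer triples T lying on some (α,0)-Euclid tree (as α ranges over all positive integers) with max T = n equals the number of partitions of n into two positive parts, namely ⌊n/2⌋. -/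
lemma mem_tree_of_layer {α β j} {T : ℕ × ℕ × ℕ} (h : T ∈ layer α β j) :
    T ∈ EuclidTree α β := Set.mem_iUnion.2 ⟨j, h⟩

lemma layer_invariant {α : ℕ} (hα : 1 ≤ α) (j : ℕ) :
    ∀ T ∈ layer α 0 j, 1 ≤ T.1 ∧ T.1 ≤ T.2.1 ∧ T.2.2 = T.1 + T.2.1 := by
  induction j with
  | zero =>
    intro T hj
    simp only [layer, Set.mem_singleton_iff] at hj
    subst hj; exact ⟨hα, le_refl _, by ring⟩
  | succ k ih =>
    rintro T ⟨P, hP, hcase⟩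
    obtain ⟨h1, h2, h3⟩ := ih P hP
    rcases hcase with rfl | rfl
    · simp only [Gamma1]
      exact ⟨le_trans h1 h2, by omega, by omega⟩
    · simp only [Gamma2]
      exact ⟨h1, by omega, by omega⟩

lemma tree_invariant {α : ℕ} (hα : 1 ≤ α) {T : ℕ × ℕ × ℕ} (h : T ∈ EuclidTree α 0) :
    1 ≤ T.1 ∧ T.1 ≤ T.2.1 ∧ T.2.2 = T.1 + T.2.1 := by
  obtain ⟨j, hj⟩ := Set.mem_iUnion.1 h
  exact layer_invariant hα j T hj

lemma tree_closed1 {α β} {T : ℕ × ℕ × ℕ} (h : T ∈ EuclidTree α β) :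
    Gamma1 β T ∈ EuclidTree α β := by
  obtain ⟨j, hj⟩ := Set.mem_iUnion.1 h
  exact mem_tree_of_layer (j := j + 1) ⟨T, hj, Or.inl rfl⟩

lemma tree_closed2 {α β} {T : ℕ × ℕ × ℕ} (h : T ∈ EuclidTree α β) :
    Gamma2 β T ∈ EuclidTree α β := by
  obtain ⟨j, hj⟩ := Set.mem_iUnion.1 h
  exact mem_tree_of_layer (j := j + 1) ⟨T, hj, Or.inr rfl⟩

lemma reach (a b : ℕ) (ha : 1 ≤ a) (hab : a ≤ b) :
    ∃ α, 1 ≤ α ∧ (a, b, a + b) ∈ EuclidTree α 0 := by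
  induction b using Nat.strong_induction_on generalizing a with
  | _ b ih =>
    rcases eq_or_lt_of_le hab with rfl | hlt
    · refine ⟨a, ha, mem_tree_of_layer (j := 0) ?_⟩
      simp only [layer, Set.mem_singleton_iff]
      rw [show 2 * a + 0 = a + a from by ring]
    · by_cases h2 : 2 * a ≤ b
      · obtain ⟨α, hα, hmem⟩ := ih (b - a) (by omega) a ha (by omega)
        refine ⟨α, hα, ?_⟩
        have := tree_closed2 (β := 0) hmem
        simpa [Gamma2, show a + (b - a) = b from by omega, show a + b + 0 = a + b from by omega]
          using this
      · obtain ⟨α, hα, hmem⟩ := ih a (by omega) (b - a) (by omega) (by omega)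
        refine ⟨α, hα, ?_⟩
        have := tree_closed1 (β := 0) hmem
        simpa [Gamma1, show b - a + a = b from by omega, show a + b + 0 = a + b from by omega]
          using this

/-- For n ≥ 3, the number of triples on some (α,0)-Euclid tree with
maximum coordinate n equals ⌊n/2⌋, the number of partitions of n into two parts. -/
theorem euclid_tree_max_count (n : ℕ) (hn : 3 ≤ n) :
    {T : ℕ × ℕ × ℕ | (∃ α, 1 ≤ α ∧ T ∈ EuclidTree α 0) ∧ tmax T = n}.ncard = n / 2 := by
  have hset : {T : ℕ × ℕ × ℕ | (∃ α, 1 ≤ α ∧ T ∈ EuclidTree α 0) ∧ tmax T = n}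
      = (fun a => (a, n - a, n)) '' Set.Icc 1 (n / 2) := by
    ext T
    constructor
    · rintro ⟨⟨α, hα, hmem⟩, hmax⟩
      obtain ⟨h1, h2, h3⟩ := tree_invariant hα hmem
      obtain ⟨a, b, c⟩ := T
      simp only at h1 h2 h3
      subst h3
      have hmax' : a + b = n := by
        simp only [tmax] at hmax; omega
      refine ⟨a, ⟨h1, ?_⟩, ?_⟩
      · omega
      · simp only
        refine Prod.ext rfl (Prod.ext ?_ ?_) <;> simp <;> omega
    · rintro ⟨a, ⟨ha1, ha2⟩, rfl⟩
      have h2a : 2 * a ≤ n := by omega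
      have heq : a + (n - a) = n := by omega
      obtain ⟨α, hα, hmem⟩ := reach a (n - a) ha1 (by omega)
      rw [heq] at hmem
      exact ⟨⟨α, hα, hmem⟩, by simp [tmax]; omega⟩
  rw [hset]
  rw [Set.ncard_image_of_injective _
    (fun x y h => by simpa using congrArg Prod.fst h)]
  rw [Set.ncard_eq_toFinset_card', Set.toFinset_Icc, Nat.card_Icc]
  omega
end

section
/- For every positive integer n, define C_0(n) to be 1 plus the number of triples T on some (α,0)-Euclid tree (over all α ≥ 1) with max T = n. Then C_0(n) = ⌊n/2⌋ + 1. -/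
/-- E(1) = 1 and, for n ≥ 2, E(n) is the number of triples on the (1,0)-Euclid tree
with maximum coordinate n. -/
noncomputable def E (n : ℕ) : ℕ :=
  if n = 1 then 1 else {T ∈ EuclidTree 1 0 | tmax T = n}.ncard

/-- C_β(n): 1 plus the number of triples on some (α,β)-Euclid tree (α ≥ 1) whose
maximum coordinate is n. -/
noncomputable def CC (β n : ℕ) : ℕ :=
  {T : ℕ × ℕ × ℕ | (∃ α, 1 ≤ α ∧ T ∈ EuclidTree α β) ∧ tmax T = n}.ncard + 1

lemma layer_inv (α j : ℕ) (hα : 1 ≤ α) :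
    ∀ T ∈ layer α 0 j, 1 ≤ T.1 ∧ T.1 ≤ T.2.1 ∧ T.2.2 = T.1 + T.2.1 := by
  induction j with
  | zero =>
    intro T hT
    simp only [layer, Set.mem_singleton_iff] at hT
    subst hT; simp; omega
  | succ j ih =>
    rintro T ⟨P, hP, h | h⟩ <;> subst h <;> obtain ⟨h1, h2, h3⟩ := ih P hP <;>
      simp only [Gamma1, Gamma2] <;> refine ⟨by omega, by omega, by omega⟩

lemma mem_tree : ∀ b a α : ℕ, 1 ≤ a → a ≤ b → Nat.gcd a b = α →
    (a, b, a + b) ∈ EuclidTree α 0 := by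
  intro b
  induction b using Nat.strong_induction_on with
  | _ b ih =>
    intro a α ha hab hg
    rcases eq_or_lt_of_le hab with rfl | hlt
    · rw [Nat.gcd_self] at hg
      subst hg
      refine Set.mem_iUnion.2 ⟨0, ?_⟩
      simp only [layer, Set.mem_singleton_iff]
      refine Prod.ext rfl (Prod.ext rfl ?_)
      simp; omega
    · set b' := b - a with hb'
      have hb'1 : 1 ≤ b' := by omega
      have hbb : b = b' + a := by omega
      have hg' : Nat.gcd a b' = α := by
        rw [hbb, Nat.gcd_add_self_right] at hg; exact hg
      rcases le_or_gt a b' with h | h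
      · obtain ⟨j, hj⟩ := Set.mem_iUnion.1 (ih b' (by omega) a α ha h hg')
        refine Set.mem_iUnion.2 ⟨j + 1, ⟨(a, b', a + b'), hj, Or.inr ?_⟩⟩
        simp only [Gamma2, Prod.mk.injEq, true_and, and_true]
        omega
      · have hg'' : Nat.gcd b' a = α := by rw [Nat.gcd_comm]; exact hg'
        obtain ⟨j, hj⟩ := Set.mem_iUnion.1 (ih a hlt b' α hb'1 (le_of_lt h) hg'')
        refine Set.mem_iUnion.2 ⟨j + 1, ⟨(b', a, b' + a), hj, Or.inl ?_⟩⟩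
        simp only [Gamma1, Prod.mk.injEq, true_and, and_true]
        omega

/-- C_0(n) = ⌊n/2⌋ + 1 for every positive integer n. -/
theorem C_zero_eq (n : ℕ) (hn : 1 ≤ n) : CC 0 n = n / 2 + 1 := by
  have hset : {T : ℕ × ℕ × ℕ | (∃ α, 1 ≤ α ∧ T ∈ EuclidTree α 0) ∧ tmax T = n} =
      ↑((Finset.Icc 1 (n / 2)).image (fun x => (x, n - x, n))) := by
    ext T
    simp only [Set.mem_setOf_eq, Finset.coe_image, Set.mem_image, Finset.mem_coe,
      Finset.mem_Icc]
    constructor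
    · rintro ⟨⟨α, hα, hT⟩, hmax⟩
      obtain ⟨j, hj⟩ := Set.mem_iUnion.1 hT
      obtain ⟨h1, h2, h3⟩ := layer_inv α j hα T hj
      have hT22 : T.2.2 = n := by
        simp only [tmax] at hmax; omega
      refine ⟨T.1, ⟨h1, by omega⟩, ?_⟩
      refine Prod.ext rfl (Prod.ext (by simp; omega) (by simp; omega))
    · rintro ⟨x, ⟨hx1, hx2⟩, rfl⟩
      have hxn : x ≤ n - x := by omega
      have hsum : x + (n - x) = n := by omega
      refine ⟨⟨Nat.gcd x (n - x), Nat.gcd_pos_of_pos_left _ (by omega), ?_⟩, ?_⟩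
      · have := mem_tree (n - x) x (Nat.gcd x (n - x)) hx1 hxn rfl
        rwa [hsum] at this
      · simp only [tmax]
        have : x ≤ n := by omega
        omega
  rw [CC, hset, Set.ncard_coe_finset,
    Finset.card_image_of_injective _ (fun a b h => by simpa using congrArg Prod.fst h),
    Nat.card_Icc]
  omega
end

section
/- Let E(n) denote, for n ≥ 2, the number of triples on the (1,0)-Euclid tree whose maximum coordinate is n, and set E(1) = 1. Then for every positive integer n, ⌊n/2⌋ + 1 = Σ_{d | n} E(d). -/
/-!
The triples of the (1,0)-Euclid tree are exactly the `(a, b, a + b)` with `0 < a ≤ b` coprime: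
running the tree backwards is the subtractive Euclidean algorithm. Hence `E n` counts the
`a ≤ n / 2` coprime to `n` (for `n = 1` this is `a = 0`, matching the convention `E 1 = 1`).
Sorting every `k ≤ n / 2` by `gcd n k` and dividing by it partitions `{0, …, n / 2}` into these
sets for the divisors of `n`, exactly as in the proof of `∑ d ∣ n, φ d = n`.
-/

open Finset

theorem Nat.card_filter_gcd_eq_range_div_succ (c : ℕ) {n d : ℕ} (hd : 0 < d) (hdn : d ∣ n) :
    #{k ∈ range (n / c + 1) | n.gcd k = d} =
      #{q ∈ range (n / d / c + 1) | (n / d).Coprime q} := by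
  obtain ⟨x, rfl⟩ := hdn
  rw [Nat.mul_div_cancel_left x hd]
  have hle (q : ℕ) : d * q < d * x / c + 1 ↔ q < x / c + 1 := by
    rcases c.eq_zero_or_pos with rfl | hc
    · simp [hd.ne']
    simp only [Nat.lt_succ_iff, Nat.le_div_iff_mul_le hc, mul_assoc, Nat.mul_le_mul_left_iff hd]
  symm
  apply card_bij fun q _ => d * q
  · simp only [mem_filter, mem_range, Nat.Coprime]
    intro q ⟨hq, hcop⟩
    exact ⟨(hle q).2 hq, by rw [Nat.gcd_mul_left, hcop, mul_one]⟩
  · simp [hd.ne']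
  · simp only [mem_filter, mem_range, exists_prop]
    rintro k ⟨hk, hgcd⟩
    obtain ⟨q, rfl⟩ : d ∣ k := hgcd ▸ Nat.gcd_dvd_right _ _
    refine ⟨q, ⟨(hle q).1 hk, ?_⟩, rfl⟩
    rwa [Nat.gcd_mul_left, mul_eq_left₀ hd.ne'] at hgcd

theorem Nat.sum_card_filter_coprime_range_div_succ (c : ℕ) {n : ℕ} (hn : n ≠ 0) :
    ∑ d ∈ n.divisors, #{a ∈ range (d / c + 1) | d.Coprime a} = n / c + 1 := by
  rw [← Nat.sum_div_divisors n]
  calc ∑ d ∈ n.divisors, #{a ∈ range (n / d / c + 1) | (n / d).Coprime a}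
      = ∑ d ∈ n.divisors, #{k ∈ range (n / c + 1) | n.gcd k = d} :=
        sum_congr rfl fun d hd =>
          (Nat.card_filter_gcd_eq_range_div_succ c (Nat.pos_of_mem_divisors hd)
            (Nat.dvd_of_mem_divisors hd)).symm
    _ = n / c + 1 := by
        rw [← card_eq_sum_card_fiberwise fun k _ =>
          Nat.mem_divisors.2 ⟨Nat.gcd_dvd_left n k, hn⟩, card_range]

namespace EuclidTree

variable {α β : ℕ}

theorem root_mem : (α, α, 2 * α + β) ∈ EuclidTree α β :=
  Set.mem_iUnion.2 ⟨0, rfl⟩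

theorem gamma1_mem {T : ℕ × ℕ × ℕ} (h : T ∈ EuclidTree α β) :
    Gamma1 β T ∈ EuclidTree α β :=
  let ⟨j, hj⟩ := Set.mem_iUnion.1 h
  Set.mem_iUnion.2 ⟨j + 1, T, hj, Or.inl rfl⟩

theorem gamma2_mem {T : ℕ × ℕ × ℕ} (h : T ∈ EuclidTree α β) :
    Gamma2 β T ∈ EuclidTree α β :=
  let ⟨j, hj⟩ := Set.mem_iUnion.1 h
  Set.mem_iUnion.2 ⟨j + 1, T, hj, Or.inr rfl⟩

@[elab_as_elim]
theorem induction {p : ℕ × ℕ × ℕ → Prop} (root : p (α, α, 2 * α + β))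
    (gamma1 : ∀ T, p T → p (Gamma1 β T)) (gamma2 : ∀ T, p T → p (Gamma2 β T))
    {T : ℕ × ℕ × ℕ} (h : T ∈ EuclidTree α β) : p T := by
  obtain ⟨j, hj⟩ := Set.mem_iUnion.1 h
  clear h
  induction j generalizing T with
  | zero => exact (Set.mem_singleton_iff.1 hj) ▸ root
  | succ j ih =>
    obtain ⟨P, hP, rfl | rfl⟩ := hj
    exacts [gamma1 P (ih hP), gamma2 P (ih hP)]

end EuclidTree

theorem mk_mem_euclidTree_one_zero {a b : ℕ} (ha : 0 < a) (hab : a ≤ b) (hcop : a.Coprime b) :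
    (a, b, a + b) ∈ EuclidTree 1 0 := by
  induction b using Nat.strong_induction_on generalizing a with
  | _ b ih =>
    rcases hab.eq_or_lt with rfl | hab
    · obtain rfl : a = 1 := (Nat.coprime_self a).1 hcop
      exact EuclidTree.root_mem
    have hcop' : a.Coprime (b - a) := (Nat.coprime_sub_self_right hab.le).2 hcop
    rcases le_total a (b - a) with h | h
    · have := EuclidTree.gamma2_mem (ih (b - a) (by omega) ha h hcop')
      simpa [Gamma2, Nat.add_sub_cancel' hab.le] using this
    · have := EuclidTree.gamma1_mem (ih a hab (by omega) h hcop'.symm)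
      simpa [Gamma1, Nat.sub_add_cancel hab.le] using this

theorem mem_euclidTree_one_zero_iff {T : ℕ × ℕ × ℕ} :
    T ∈ EuclidTree 1 0 ↔ ∃ a b, 0 < a ∧ a ≤ b ∧ a.Coprime b ∧ T = (a, b, a + b) := by
  constructor
  · intro h
    refine EuclidTree.induction ⟨1, 1, by simp⟩ ?_ ?_ h
    · rintro _ ⟨a, b, ha, hab, hcop, rfl⟩
      exact ⟨b, a + b, by omega, by omega, Nat.coprime_add_self_right.2 hcop.symm, by
        simp [Gamma1]⟩
    · rintro _ ⟨a, b, ha, hab, hcop, rfl⟩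
      exact ⟨a, a + b, ha, by omega, Nat.coprime_self_add_right.2 hcop, by
        simp [Gamma2]⟩
  · rintro ⟨a, b, ha, hab, hcop, rfl⟩
    exact mk_mem_euclidTree_one_zero ha hab hcop

theorem E_eq_card_filter_coprime (n : ℕ) : E n = #{a ∈ range (n / 2 + 1) | n.Coprime a} := by
  by_cases hn : n = 1
  · subst hn
    decide
  have hset : {T ∈ EuclidTree 1 0 | tmax T = n} =
      ((range (n / 2 + 1)).filter (n.Coprime ·)).image (fun a => (a, n - a, n)) := by
    ext T
    simp only [mem_euclidTree_one_zero_iff, coe_image, coe_filter,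
      mem_range, Set.mem_image]
    constructor
    · rintro ⟨⟨a, b, ha, hab, hcop, rfl⟩, hmax⟩
      obtain rfl : a + b = n := by simpa [tmax] using hmax
      exact ⟨a, ⟨by omega, Nat.coprime_self_add_left.2 hcop.symm⟩, by simp⟩
    · rintro ⟨a, ⟨ha, hcop⟩, rfl⟩
      have ha0 : a ≠ 0 := by
        rintro rfl
        exact hn ((Nat.coprime_zero_right n).1 hcop)
      have hcop' : a.Coprime (n - a) := (Nat.coprime_sub_self_right (by omega)).2 hcop.symm
      exact ⟨⟨a, n - a, by omega, by omega, hcop', by rw [Nat.add_sub_cancel' (by omega)]⟩,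
        by simp only [tmax]; omega⟩
  rw [E, if_neg hn, hset, Set.ncard_coe_finset, card_image_of_injective]
  intro a b h
  exact congrArg Prod.fst h

/-- For every positive integer n, ⌊n/2⌋ + 1 = Σ_{d ∣ n} E(d). -/
theorem floor_half_add_one_eq_sum_E (n : ℕ) (hn : 1 ≤ n) :
    n / 2 + 1 = ∑ d ∈ n.divisors, E d := by
  simp only [E_eq_card_filter_coprime]
  exact (Nat.sum_card_filter_coprime_range_div_succ 2 (by omega)).symm
end

section
/- Let β ≥ 0 and n ≥ 1 be integers, let E be the counting function of maxima on the (1,0)-Euclid tree (E(1)=1, E(d) = number of triples on the (1,0)-Euclid tree with max d for d ≥ 2), and let C_β(n) be 1 plus the number of triples T on some (α,β)-Euclid tree (over all α ≥ 1) with max T = n. Then C_β(n) = Σ_{d | (n+β), βd < n+β} E(d). -/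
/-!
The (α,β)-Euclid tree is the image of the (1,0)-Euclid tree under `S ↦ (α + β) S - β`
(coordinatewise), since this map intertwines the branching operations for `β` with those
for `0`. The (1,0)-tree consists of triples `(a, b, a + b)` with `a, b` coprime, so `k`
is recovered from `k S` as the gcd of its first two coordinates: the maps `S ↦ k S - β`
with `k > β` are injective on the (1,0)-tree and have pairwise disjoint images. Hence the
triples of maximum `n` on the trees with `α ≥ 1` correspond bijectively to the triples of
maximum `d` on the (1,0)-tree with `(α + β) d = n + β`, i.e. with `d` dividing `n + β` and
`β d < n + β`. No triple on the (1,0)-tree has maximum `1`; the summand `E 1 = 1` is the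
`+ 1` in `C_β(n)`.
-/

def IsCoprimeSumTriple (S : ℕ × ℕ × ℕ) : Prop :=
  0 < S.1 ∧ 0 < S.2.1 ∧ S.2.2 = S.1 + S.2.1 ∧ Nat.Coprime S.1 S.2.1

lemma isCoprimeSumTriple_of_mem_layer_one_zero {j : ℕ} {S : ℕ × ℕ × ℕ}
    (hS : S ∈ layer 1 0 j) : IsCoprimeSumTriple S := by
  induction j generalizing S with
  | zero =>
    rw [layer, Set.mem_singleton_iff] at hS
    exact hS ▸ ⟨one_pos, one_pos, rfl, Nat.coprime_one_left 1⟩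
  | succ j ih =>
    obtain ⟨P, hP, rfl | rfl⟩ := hS <;> obtain ⟨h1, h2, h3, hcop⟩ := ih hP
    · exact ⟨h2, by simp only [Gamma1]; omega, by simp only [Gamma1]; omega,
        by simpa [Gamma1, h3] using hcop.symm⟩
    · exact ⟨h1, by simp only [Gamma2]; omega, by simp only [Gamma2]; omega,
        by simpa [Gamma2, h3] using hcop⟩

lemma isCoprimeSumTriple_of_mem_euclidTree_one_zero {S : ℕ × ℕ × ℕ}
    (hS : S ∈ EuclidTree 1 0) : IsCoprimeSumTriple S :=
  have ⟨_, hj⟩ := Set.mem_iUnion.mp hS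
  isCoprimeSumTriple_of_mem_layer_one_zero hj

namespace IsCoprimeSumTriple

variable {S : ℕ × ℕ × ℕ} (hS : IsCoprimeSumTriple S)
include hS

lemma tmax_eq : tmax S = S.2.2 := by
  obtain ⟨-, -, h3, -⟩ := hS
  simp only [tmax]
  omega

lemma two_le : 2 ≤ S.2.2 := by
  obtain ⟨h1, h2, h3, -⟩ := hS
  omega

end IsCoprimeSumTriple

def shiftScale (k β : ℕ) (S : ℕ × ℕ × ℕ) : ℕ × ℕ × ℕ :=
  (k * S.1 - β, k * S.2.1 - β, k * S.2.2 - β)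

section shiftScale

variable {k β : ℕ} {S : ℕ × ℕ × ℕ}

lemma gamma1_shiftScale (h2 : β ≤ k * S.2.1) (h3 : β ≤ k * S.2.2) :
    Gamma1 β (shiftScale k β S) = shiftScale k β (Gamma1 0 S) := by
  simp only [Gamma1, shiftScale, Prod.mk.injEq, Nat.mul_add, Nat.add_zero, true_and]
  omega

lemma gamma2_shiftScale (h1 : β ≤ k * S.1) (h3 : β ≤ k * S.2.2) :
    Gamma2 β (shiftScale k β S) = shiftScale k β (Gamma2 0 S) := by
  simp only [Gamma2, shiftScale, Prod.mk.injEq, Nat.mul_add, Nat.add_zero, true_and]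
  omega

lemma IsCoprimeSumTriple.le_mul (hS : IsCoprimeSumTriple S) (hk : β ≤ k) :
    β ≤ k * S.1 ∧ β ≤ k * S.2.1 ∧ β ≤ k * S.2.2 := by
  obtain ⟨h1, h2, h3, -⟩ := hS
  refine ⟨?_, ?_, ?_⟩ <;> exact hk.trans (Nat.le_mul_of_pos_right k (by omega))

lemma IsCoprimeSumTriple.tmax_shiftScale (hS : IsCoprimeSumTriple S) :
    tmax (shiftScale k β S) = k * S.2.2 - β := by
  obtain ⟨-, -, h3, -⟩ := hS
  have := Nat.mul_le_mul_left k (show S.1 ≤ S.2.2 by omega)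
  have := Nat.mul_le_mul_left k (show S.2.1 ≤ S.2.2 by omega)
  simp only [tmax, shiftScale]
  omega

lemma layer_eq_image_shiftScale (α β j : ℕ) :
    layer α β j = shiftScale (α + β) β '' layer 1 0 j := by
  induction j with
  | zero =>
    simp only [layer, Set.image_singleton, shiftScale, Set.singleton_eq_singleton_iff,
      Prod.mk.injEq]
    omega
  | succ j ih =>
    ext T
    simp only [layer, ih, Set.mem_image, Set.mem_ofPred_eq]
    constructor
    · rintro ⟨_, ⟨S, hS, rfl⟩, rfl | rfl⟩ <;>
        obtain ⟨h1, h2, h3⟩ := (isCoprimeSumTriple_of_mem_layer_one_zero hS).le_mul le_add_self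
      · exact ⟨_, ⟨S, hS, Or.inl rfl⟩, (gamma1_shiftScale h2 h3).symm⟩
      · exact ⟨_, ⟨S, hS, Or.inr rfl⟩, (gamma2_shiftScale h1 h3).symm⟩
    · rintro ⟨_, ⟨S, hS, rfl | rfl⟩, rfl⟩ <;>
        obtain ⟨h1, h2, h3⟩ := (isCoprimeSumTriple_of_mem_layer_one_zero hS).le_mul le_add_self
      · exact ⟨_, ⟨S, hS, rfl⟩, Or.inl (gamma1_shiftScale h2 h3).symm⟩
      · exact ⟨_, ⟨S, hS, rfl⟩, Or.inr (gamma2_shiftScale h1 h3).symm⟩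

lemma euclidTree_eq_image_shiftScale (α β : ℕ) :
    EuclidTree α β = shiftScale (α + β) β '' EuclidTree 1 0 := by
  rw [EuclidTree, EuclidTree, Set.image_iUnion]
  exact Set.iUnion_congr (layer_eq_image_shiftScale α β)

end shiftScale

namespace IsCoprimeSumTriple

variable {S S' : ℕ × ℕ × ℕ}

lemma gcd_mul (hS : IsCoprimeSumTriple S) (k : ℕ) : Nat.gcd (k * S.1) (k * S.2.1) = k := by
  rw [Nat.gcd_mul_left, hS.2.2.2.gcd_eq_one, mul_one]

lemma shiftScale_inj {k k' β : ℕ} (hS : IsCoprimeSumTriple S) (hS' : IsCoprimeSumTriple S')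
    (hk : β < k) (hk' : β < k') (h : shiftScale k β S = shiftScale k' β S') :
    k = k' ∧ S = S' := by
  obtain ⟨b1, b2, -⟩ := hS.le_mul hk.le
  obtain ⟨b1', b2', -⟩ := hS'.le_mul hk'.le
  simp only [shiftScale, Prod.mk.injEq] at h
  have e1 : k * S.1 = k' * S'.1 := by omega
  have e2 : k * S.2.1 = k' * S'.2.1 := by omega
  have hkk : k = k' := by rw [← hS.gcd_mul k, ← hS'.gcd_mul k', e1, e2]
  subst hkk
  have f1 := Nat.eq_of_mul_eq_mul_left (by omega) e1
  have f2 := Nat.eq_of_mul_eq_mul_left (by omega) e2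
  exact ⟨rfl, Prod.ext f1 (Prod.ext f2 (by rw [hS.2.2.1, hS'.2.2.1, f1, f2]))⟩

end IsCoprimeSumTriple

lemma finite_setOf_tmax_le (m : ℕ) : {T : ℕ × ℕ × ℕ | tmax T ≤ m}.Finite :=
  (Set.finite_Iic (m, m, m)).subset fun T hT => by
    simp only [tmax, Set.mem_ofPred_eq, Set.mem_Iic, Prod.le_def] at hT ⊢
    omega

def admissibleDivisors (β n : ℕ) : Finset ℕ :=
  (n + β).divisors.filter (fun d => β * d < n + β)

section Counting

variable {β n : ℕ}

lemma one_mem_admissibleDivisors (hn : 1 ≤ n) : 1 ∈ admissibleDivisors β n := by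
  simp only [admissibleDivisors, Finset.mem_filter, Nat.mem_divisors]
  omega

lemma mem_admissibleDivisors_iff {d : ℕ} :
    d ∈ admissibleDivisors β n ↔ d ∣ n + β ∧ β < (n + β) / d := by
  simp only [admissibleDivisors, Finset.mem_filter, Nat.mem_divisors]
  refine ⟨fun ⟨⟨hdvd, _⟩, hβd⟩ => ⟨hdvd, (Nat.lt_div_iff_mul_lt' hdvd β).2 (by rwa [mul_comm])⟩,
    fun ⟨hdvd, hβk⟩ => ?_⟩
  have hβd := (Nat.lt_div_iff_mul_lt' hdvd β).1 hβk
  exact ⟨⟨hdvd, by omega⟩, by rwa [mul_comm]⟩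

variable (β n)

lemma setOf_tmax_eq_biUnion :
    {T : ℕ × ℕ × ℕ | (∃ α, 1 ≤ α ∧ T ∈ EuclidTree α β) ∧ tmax T = n} =
      ⋃ d ∈ (admissibleDivisors β n : Set ℕ),
        shiftScale ((n + β) / d) β '' {S ∈ EuclidTree 1 0 | tmax S = d} := by
  ext T
  simp only [Set.mem_ofPred_eq, Set.mem_iUnion, Set.mem_image, exists_prop, Finset.mem_coe,
    mem_admissibleDivisors_iff]
  constructor
  · rintro ⟨⟨α, hα, hT⟩, rfl⟩
    rw [euclidTree_eq_image_shiftScale] at hT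
    obtain ⟨S, hS10, rfl⟩ := hT
    have hS := isCoprimeSumTriple_of_mem_euclidTree_one_zero hS10
    have hmax : tmax (shiftScale (α + β) β S) + β = (α + β) * S.2.2 := by
      have := (hS.le_mul (le_add_self : β ≤ α + β)).2.2
      rw [hS.tmax_shiftScale]
      omega
    have hk : (tmax (shiftScale (α + β) β S) + β) / S.2.2 = α + β := by
      rw [hmax, Nat.mul_div_cancel _ (by linarith [hS.two_le])]
    exact ⟨S.2.2, ⟨Dvd.intro_left _ hmax.symm, by omega⟩, S, ⟨hS10, hS.tmax_eq⟩, by rw [hk]⟩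
  · rintro ⟨d, ⟨hdvd, hβk⟩, S, ⟨hS10, rfl⟩, rfl⟩
    have hS := isCoprimeSumTriple_of_mem_euclidTree_one_zero hS10
    refine ⟨⟨(n + β) / tmax S - β, by omega, ?_⟩, ?_⟩
    · rw [euclidTree_eq_image_shiftScale, Nat.sub_add_cancel hβk.le]
      exact ⟨S, hS10, rfl⟩
    · rw [hS.tmax_shiftScale, ← hS.tmax_eq, Nat.div_mul_cancel hdvd]
      omega

lemma ncard_setOf_tmax_eq :
    {T : ℕ × ℕ × ℕ | (∃ α, 1 ≤ α ∧ T ∈ EuclidTree α β) ∧ tmax T = n}.ncard =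
      ∑ d ∈ admissibleDivisors β n, {S ∈ EuclidTree 1 0 | tmax S = d}.ncard := by
  have hinj {d e : ℕ} {S S' : ℕ × ℕ × ℕ} (hd : d ∈ admissibleDivisors β n)
      (he : e ∈ admissibleDivisors β n) (hS : S ∈ EuclidTree 1 0) (hS' : S' ∈ EuclidTree 1 0)
      (h : shiftScale ((n + β) / d) β S = shiftScale ((n + β) / e) β S') :
      (n + β) / d = (n + β) / e ∧ S = S' :=
    (isCoprimeSumTriple_of_mem_euclidTree_one_zero hS).shiftScale_inj
      (isCoprimeSumTriple_of_mem_euclidTree_one_zero hS')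
      (mem_admissibleDivisors_iff.1 hd).2 (mem_admissibleDivisors_iff.1 he).2 h
  rw [setOf_tmax_eq_biUnion, Set.Finite.ncard_biUnion (Finset.finite_toSet _),
    finsum_mem_coe_finset]
  · exact Finset.sum_congr rfl fun d hd =>
      Set.InjOn.ncard_image fun S hS S' hS' h => (hinj hd hd hS.1 hS'.1 h).2
  · exact fun d _ => ((finite_setOf_tmax_le d).subset fun S hS => hS.2.le).image _
  · rintro d hd e he hde
    refine Set.disjoint_left.2 ?_
    rintro _ ⟨S, hS, rfl⟩ ⟨S', hS', h⟩
    obtain ⟨-, rfl⟩ := hinj he hd hS'.1 hS.1 h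
    exact hde (hS.2.symm.trans hS'.2)

end Counting

lemma E_eq_ncard_add (d : ℕ) :
    E d = {S ∈ EuclidTree 1 0 | tmax S = d}.ncard + if d = 1 then 1 else 0 := by
  rw [E]
  split_ifs with hd
  · suffices {S ∈ EuclidTree 1 0 | tmax S = d} = ∅ by rw [this, Set.ncard_empty]
    refine Set.eq_empty_of_forall_notMem fun S ⟨hS10, hSd⟩ => ?_
    have hS := isCoprimeSumTriple_of_mem_euclidTree_one_zero hS10
    linarith [hS.two_le, hS.tmax_eq]
  · rfl

/-- C_β(n) = Σ_{d ∣ (n+β), βd < n+β} E(d) for β ≥ 0 and n ≥ 1. -/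
theorem C_beta_eq_sum_E (β n : ℕ) (hn : 1 ≤ n) :
    CC β n = ∑ d ∈ (n + β).divisors.filter (fun d => β * d < n + β), E d := by
  change _ = ∑ d ∈ admissibleDivisors β n, E d
  simp only [CC, ncard_setOf_tmax_eq, E_eq_ncard_add, Finset.sum_add_distrib,
    Finset.sum_ite_eq', if_pos (one_mem_admissibleDivisors hn)]
end

section
/- Let K be a field of characteristic ≠ 2 and A ∈ K[t] nonzero. If (x,y,z) ∈ K[t]³ satisfies x² + y² + z² = Axyz, x ∈ K* is a nonzero constant, deg y = deg z ≥ 1, and y = az + b with a ∈ K*, b ∈ K[t], deg b < deg z, then b ≠ 0, a² + 1 = Aax, 2ab = Abx, and b² + x² = 0; in particular a² = 1, A is constant, x = 2a/A, and b = ±ix with i² = −1 in K. -/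
open Polynomial

/-- In a fundamental Markoff triple with x a nonzero constant, writing
y = az + b with deg b < deg z, we get b ≠ 0, a² + 1 = Aax, 2ab = Abx, b² + x² = 0;
in particular a² = 1, A is constant, x = 2a/A, and b = ±ix with i² = −1 in K. -/
theorem markoff_fundamental_division_relations
    {K : Type*} [Field K] (h2 : (2 : K) ≠ 0)
    (A : Polynomial K) (hA : A ≠ 0)
    (x y z : Polynomial K) (c : K) (hc : c ≠ 0) (hxc : x = C c)
    (heq : x ^ 2 + y ^ 2 + z ^ 2 = A * x * y * z)
    (hz : 1 ≤ z.natDegree) (hyz : y.degree = z.degree)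
    (a : K) (ha : a ≠ 0) (b : Polynomial K)
    (hdiv : y = C a * z + b) (hb : b.degree < z.degree) :
    b ≠ 0 ∧
    C (a ^ 2 + 1) = A * C a * x ∧
    C (2 * a) * b = A * b * x ∧
    b ^ 2 + x ^ 2 = 0 ∧
    a ^ 2 = 1 ∧
    A.natDegree = 0 ∧
    (∃ A₀ : K, A₀ ≠ 0 ∧ A = C A₀ ∧ x = C (2 * a / A₀)) ∧
    ∃ i : K, i ^ 2 = -1 ∧ (b = C i * x ∨ b = -(C i) * x) := by
  subst hdiv
  subst hxc
  have hz0 : z ≠ 0 := fun h => by simp [h] at hz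
  have key : ((C a) ^ 2 + 1 - A * C a * C c) * z ^ 2
      + (2 * C a - A * C c) * (b * z) + (b ^ 2 + (C c) ^ 2) = 0 := by
    linear_combination heq
  have hdvd : z ∣ b ^ 2 + (C c) ^ 2 :=
    ⟨-(((C a) ^ 2 + 1 - A * C a * C c) * z + (2 * C a - A * C c) * b),
      by linear_combination key⟩
  -- b ≠ 0
  have hbne : b ≠ 0 := by
    intro hb0
    rw [hb0] at hdvd
    have hne : (0 : Polynomial K) ^ 2 + (C c) ^ 2 ≠ 0 := by
      simp [pow_ne_zero, hc]
    have := Polynomial.natDegree_le_of_dvd hdvd hne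
    simp [natDegree_pow] at this
    omega
  have hk : b.natDegree < z.natDegree := natDegree_lt_natDegree hbne hb
  -- U = 0
  have hU : (C a) ^ 2 + 1 - A * C a * C c = 0 := by
    by_contra hU
    have hmu : A.natDegree ≤ ((C a) ^ 2 + 1 - A * C a * C c).natDegree := by
      rcases Nat.eq_zero_or_pos A.natDegree with h | h
      · omega
      · have hCa : ((C a) ^ 2 + 1 : Polynomial K) = C (a ^ 2 + 1) := by
          simp [map_add, map_pow]
        have hdA : ((C a) ^ 2 + 1 : Polynomial K).degree < (A * C a * C c).degree := by
          rw [hCa]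
          calc (C (a ^ 2 + 1)).degree ≤ 0 := degree_C_le
            _ < (A * C a * C c).degree := by
              rw [degree_mul, degree_mul, degree_C ha, degree_C hc]
              simp only [add_zero]
              rw [degree_eq_natDegree hA]
              exact_mod_cast h
        have hdeq := degree_sub_eq_right_of_degree_lt hdA
        have h3 : ((C a) ^ 2 + 1 - A * C a * C c).natDegree = (A * C a * C c).natDegree :=
          natDegree_eq_of_degree_eq hdeq
        rw [h3, natDegree_mul (mul_ne_zero hA (C_ne_zero.mpr ha)) (C_ne_zero.mpr hc),
          natDegree_mul hA (C_ne_zero.mpr ha), natDegree_C, natDegree_C]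
        omega
    have hEq : ((C a) ^ 2 + 1 - A * C a * C c) * z ^ 2
        = -((2 * C a - A * C c) * (b * z) + (b ^ 2 + (C c) ^ 2)) := by
      linear_combination key
    have hL : (((C a) ^ 2 + 1 - A * C a * C c) * z ^ 2).natDegree
        = ((C a) ^ 2 + 1 - A * C a * C c).natDegree + 2 * z.natDegree := by
      rw [natDegree_mul hU (pow_ne_zero _ hz0), natDegree_pow]
    have hV : (2 * C a - A * C c).natDegree ≤ A.natDegree := by
      refine le_trans (natDegree_sub_le _ _) ?_
      have h1 : (2 * C a : Polynomial K).natDegree = 0 := by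
        rw [show (2 : Polynomial K) * C a = C (2 * a) by rw [map_mul, map_ofNat]]
        exact natDegree_C _
      have h2 : (A * C c).natDegree ≤ A.natDegree := by
        refine le_trans (natDegree_mul_le) ?_
        simp [natDegree_C]
      simp only [h1, max_le_iff]
      exact ⟨Nat.zero_le _, h2⟩
    have hR1 : ((2 * C a - A * C c) * (b * z)).natDegree
        ≤ A.natDegree + (b.natDegree + z.natDegree) := by
      refine le_trans (natDegree_mul_le) ?_
      exact add_le_add hV (le_trans natDegree_mul_le (by omega))
    have hR2 : (b ^ 2 + (C c) ^ 2).natDegree ≤ 2 * b.natDegree := by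
      refine le_trans (natDegree_add_le _ _) ?_
      simp [natDegree_pow, natDegree_C]
    have hRle : (-((2 * C a - A * C c) * (b * z) + (b ^ 2 + (C c) ^ 2))).natDegree
        ≤ max (A.natDegree + (b.natDegree + z.natDegree)) (2 * b.natDegree) := by
      rw [natDegree_neg]
      exact le_trans (natDegree_add_le _ _) (max_le_max hR1 hR2)
    rw [← hEq, hL] at hRle
    rcases le_max_iff.mp hRle with h | h <;> omega
  -- consequences of U = 0
  have hC1 : C (a ^ 2 + 1) = A * C a * C c := by
    rw [map_add, map_pow, map_one]
    linear_combination hU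
  have hdegA : A.natDegree = 0 := by
    have hAC : A * C (a * c) = C (a ^ 2 + 1) := by
      rw [map_mul, hC1]; ring
    have := congrArg natDegree hAC
    rwa [natDegree_mul hA (C_ne_zero.mpr (mul_ne_zero ha hc)), natDegree_C,
      natDegree_C, add_zero] at this
  obtain ⟨A₀, hA0⟩ := natDegree_eq_zero.mp hdegA
  have hA0ne : A₀ ≠ 0 := by rintro rfl; simp at hA0; exact hA (hA0.symm)
  have haac : a ^ 2 + 1 = A₀ * (a * c) := by
    have : C (a ^ 2 + 1) = C (A₀ * (a * c)) := by
      rw [hC1, ← hA0, map_mul, map_mul]; ring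
    exact C_injective this
  -- q = 0
  have E2 : C (2 * a - A₀ * c) * (b * z) + (b ^ 2 + (C c) ^ 2) = 0 := by
    have hV2 : C (2 * a - A₀ * c) = 2 * C a - A * C c := by
      rw [← hA0, map_sub, map_mul, map_mul, map_ofNat]
    rw [hV2]
    linear_combination key - z ^ 2 * hU
  have hq : 2 * a - A₀ * c = 0 := by
    by_contra hq
    have hbz : C (2 * a - A₀ * c) * (b * z) = -(b ^ 2 + (C c) ^ 2) := by
      linear_combination E2
    have hRne : b ^ 2 + (C c) ^ 2 ≠ 0 := by
      intro h0
      rw [h0, neg_zero, mul_eq_zero, mul_eq_zero] at hbz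
      rcases hbz with h | h
      · exact hq (by simpa using C_injective (by simpa using h : C (2*a - A₀*c) = C 0))
      · tauto
    have := congrArg natDegree hbz
    rw [natDegree_mul (C_ne_zero.mpr hq) (mul_ne_zero hbne hz0),
      natDegree_mul hbne hz0, natDegree_C, natDegree_neg] at this
    have hle : (b ^ 2 + (C c) ^ 2).natDegree ≤ 2 * b.natDegree := by
      refine le_trans (natDegree_add_le _ _) ?_
      simp [natDegree_pow, natDegree_C]
    omega
  have hq0 : 2 * a = A₀ * c := by linear_combination hq
  have hR : b ^ 2 + (C c) ^ 2 = 0 := by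
    rw [hq, map_zero, zero_mul, zero_add] at E2
    exact E2
  -- a² = 1
  have ha2 : a ^ 2 = 1 := by linear_combination a * hq0 - haac
  -- b constant
  have hbdeg : b.natDegree = 0 := by
    have hb2 : b ^ 2 = C (-(c ^ 2)) := by
      rw [map_neg, map_pow]
      linear_combination hR
    have := congrArg natDegree hb2
    rw [natDegree_pow, natDegree_C] at this
    omega
  obtain ⟨b₀, hb0⟩ := natDegree_eq_zero.mp hbdeg
  have hb0ne : b₀ ≠ 0 := by rintro rfl; simp at hb0; exact hbne hb0.symm
  have hbc : b₀ ^ 2 + c ^ 2 = 0 := by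
    have : C (b₀ ^ 2 + c ^ 2) = C 0 := by
      rw [map_add, map_pow, map_pow, map_zero, hb0]
      exact hR
    simpa using C_injective this
  refine ⟨hbne, by rw [hC1], ?_, hR, ha2, hdegA,
    ⟨A₀, hA0ne, hA0.symm, ?_⟩, ⟨b₀ / c, ?_, Or.inl ?_⟩⟩
  · -- C (2a) * b = A * b * C c
    rw [← hA0]
    have : C A₀ * C c = C (2 * a) := by rw [← map_mul, ← hq0]
    linear_combination -b * this
  · -- C c = C (2a / A₀)
    have : c = 2 * a / A₀ := by field_simp; linear_combination -hq0
    rw [this]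
  · -- (b₀/c)^2 = -1
    field_simp
    linear_combination hbc
  · -- b = C (b₀/c) * C c
    rw [← map_mul, div_mul_cancel₀ _ hc, hb0]
end
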